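/- Let V be a finite set and let B ⊆ 2^V be a nonempty Sperner hypergraph. Then Φ_B is the unique pure Horn function h with K(h) = B if and only if for every minimal transversal T ∈ B^d and every v ∈ V∖T there exists T' ∈ B^d with T' ≠ T and T' ⊆ T ∪ {v}. -/

import Mathlib

open scoped Classical

variable {V : Type*} [Fintype V] [DecidableEq V]

/-- A Sperner hypergraph: no hyperedge contains another one. -/
def SpernerFam (𝓑 : Set (Finset V)) : Prop :=
  ∀ B₁ ∈ 𝓑, ∀ B₂ ∈ 𝓑, B₁ ⊆ B₂ → B₁ = B₂

/-- `T` is a transversal of `𝓑` if it meets every hyperedge. -/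
def IsTransversal (𝓑 : Set (Finset V)) (T : Finset V) : Prop :=
  ∀ B ∈ 𝓑, (T ∩ B).Nonempty

/-- `𝓑^d`: the family of inclusion-minimal transversals of `𝓑`. -/
def dualHyp (𝓑 : Set (Finset V)) : Set (Finset V) :=
  {T | IsTransversal 𝓑 T ∧ ∀ T', IsTransversal 𝓑 T' → T' ⊆ T → T' = T}

/-- A Boolean function `h` on `V` is pure Horn if its set of true assignments contains the
all-true assignment and is closed under componentwise AND. -/
def PureHorn (h : (V → Bool) → Bool) : Prop :=
  h (fun _ => true) = true ∧
  ∀ x y : V → Bool, h x = true → h y = true → h (fun v => x v && y v) = true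

/-- The clause `A → v` is an implicate of `h`: every true assignment of `h` that is true on
every element of `A` is also true at `v`. -/
def Implicate (h : (V → Bool) → Bool) (A : Finset V) (v : V) : Prop :=
  ∀ x : V → Bool, h x = true → (∀ a ∈ A, x a = true) → x v = true

/-- `K` is a key of `h` if `K → v` is an implicate of `h` for every `v ∈ V \ K`. -/
def IsKey (h : (V → Bool) → Bool) (K : Finset V) : Prop :=
  ∀ v ∉ K, Implicate h K v

/-- `𝒦(h)`: the family of inclusion-minimal keys of `h`. -/
def minKeys (h : (V → Bool) → Bool) : Set (Finset V) :=
  {K | IsKey h K ∧ ∀ K', IsKey h K' → K' ⊆ K → K' = K}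

/-- `Φ_𝓑`: the pure Horn function whose true assignments are exactly those `x` such that for
every `B ∈ 𝓑` on which `x` is identically true, `x` is identically true on all of `V`. -/
noncomputable def PhiB (𝓑 : Set (Finset V)) : (V → Bool) → Bool :=
  fun x => decide (∀ B ∈ 𝓑, (∀ u ∈ B, x u = true) → ∀ v : V, x v = true)

/-- `𝓑` is a unique key hypergraph: `Φ_𝓑` is the unique pure Horn function `h`
with `𝒦(h) = 𝓑`. -/
def UniqueKeyHypergraph (𝓑 : Set (Finset V)) : Prop :=
  minKeys (PhiB 𝓑) = 𝓑 ∧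
  ∀ h : (V → Bool) → Bool, PureHorn h → minKeys h = 𝓑 → h = PhiB 𝓑

/-!
Write an assignment as `falseOn U`, with `U` its set of false variables. If `h` is pure Horn with
`𝒦(h) = 𝓑`, every true assignment of `h` is true for `Φ_𝓑`, and `falseOn T` is true for `h` for each
`T ∈ 𝓑^d`; by closure under AND, so is `falseOn U` whenever `U` is a union of minimal
transversals. Both bounds are attained by pure Horn functions with `𝒦 = 𝓑`, namely `Φ_𝓑` (true
exactly at `falseOn U` for `U = ∅` or `U` a transversal) and `minHorn 𝓑`. So `Φ_𝓑` is unique iff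
every transversal is a union of minimal transversals, which is what the exchange condition
`T' ⊆ T ∪ {v}` says one element `v` at a time.
-/

lemma exists_subset_minimal {α : Type*} {P : Finset α → Prop} {U : Finset α} (hU : P U) :
    ∃ T ⊆ U, P T ∧ ∀ T', P T' → T' ⊆ T → T' = T := by
  obtain ⟨T, hTU, hT⟩ := exists_minimal_le_of_wellFoundedLT P U hU
  exact ⟨T, hTU, hT.prop, fun T' hT' hT'T => ((minimal_iff.1 hT).2 hT' hT'T).symm⟩

section

variable {α : Type*} {𝓑 : Set (Finset α)} {h : (α → Bool) → Bool}

lemma IsKey.mono {K K' : Finset α} (hK : IsKey h K) (hKK' : K ⊆ K') : IsKey h K' :=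
  fun v hv x hx hxK => hK v (fun hvK => hv (hKK' hvK)) x hx fun a ha => hxK a (hKK' ha)

lemma isKey_iff_exists_minKeys_subset {K : Finset α} :
    IsKey h K ↔ ∃ B ∈ minKeys h, B ⊆ K := by
  refine ⟨fun hK => ?_, fun ⟨B, hB, hBK⟩ => hB.1.mono hBK⟩
  obtain ⟨B, hBK, hB, hmin⟩ := exists_subset_minimal hK
  exact ⟨B, ⟨hB, hmin⟩, hBK⟩

lemma minKeys_eq_of_isKey_iff (hSp : SpernerFam 𝓑)
    (hkey : ∀ K, IsKey h K ↔ ∃ B ∈ 𝓑, B ⊆ K) : minKeys h = 𝓑 := by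
  ext K
  constructor
  · rintro ⟨hK, hmin⟩
    obtain ⟨B, hB, hBK⟩ := (hkey K).1 hK
    rwa [← hmin B ((hkey B).2 ⟨B, hB, subset_rfl⟩) hBK]
  · intro hK
    refine ⟨(hkey K).2 ⟨K, hK, subset_rfl⟩, fun K' hK' hK'K => ?_⟩
    obtain ⟨B, hB, hBK'⟩ := (hkey K').1 hK'
    exact subset_antisymm hK'K (hSp B hB K hK (hBK'.trans hK'K) ▸ hBK')

variable [DecidableEq α]

def falseOn (U : Finset α) : α → Bool := fun v => decide (v ∉ U)

@[simp]
lemma falseOn_eq_true {U : Finset α} {v : α} : falseOn U v = true ↔ v ∉ U := by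
  simp [falseOn]

@[simp]
lemma falseOn_eq_false {U : Finset α} {v : α} : falseOn U v = false ↔ v ∈ U := by
  simp [falseOn]

lemma PureHorn.falseOn_sup (hh : PureHorn h) {ι : Type*} (s : Finset ι) (f : ι → Finset α)
    (hs : ∀ i ∈ s, h (falseOn (f i)) = true) : h (falseOn (s.sup f)) = true := by
  refine Finset.sup_induction (p := fun U => h (falseOn U) = true) ?_ (fun U hU W hW => ?_) hs
  · convert hh.1 using 2
    funext v
    simp [falseOn]
  · convert hh.2 _ _ hU hW using 2
    funext v
    simp [falseOn]

lemma IsTransversal.mono {U W : Finset α} (hU : IsTransversal 𝓑 U) (hUW : U ⊆ W) :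
    IsTransversal 𝓑 W :=
  fun B hB => (hU B hB).mono (Finset.inter_subset_inter hUW subset_rfl)

lemma IsTransversal.nonempty (hne : 𝓑.Nonempty) {T : Finset α} (hT : IsTransversal 𝓑 T) :
    T.Nonempty :=
  let ⟨B, hB⟩ := hne
  (hT B hB).mono Finset.inter_subset_left

lemma exists_dualHyp_subset {U : Finset α} (hU : IsTransversal 𝓑 U) :
    ∃ T ∈ dualHyp 𝓑, T ⊆ U := by
  obtain ⟨T, hTU, hT, hmin⟩ := exists_subset_minimal hU
  exact ⟨T, ⟨hT, hmin⟩, hTU⟩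

lemma exists_mem_dualHyp_of_exchange
    (hex : ∀ T ∈ dualHyp 𝓑, ∀ v ∉ T, ∃ T' ∈ dualHyp 𝓑, T' ≠ T ∧ T' ⊆ T ∪ {v})
    {U : Finset α} (hU : IsTransversal 𝓑 U) {v : α} (hv : v ∈ U) :
    ∃ T ∈ dualHyp 𝓑, v ∈ T ∧ T ⊆ U := by
  obtain ⟨T, hT, hTU⟩ := exists_dualHyp_subset hU
  by_cases hvT : v ∈ T
  · exact ⟨T, hT, hvT, hTU⟩
  obtain ⟨T', hT', hT'T, hT'sub⟩ := hex T hT v hvT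
  have hvT' : v ∈ T' := by
    by_contra hvT'
    refine hT'T (hT.2 T' hT'.1 fun u hu => ?_)
    rcases Finset.mem_union.1 (hT'sub hu) with huT | huv
    · exact huT
    · exact absurd (Finset.mem_singleton.1 huv ▸ hu) hvT'
  exact ⟨T', hT', hvT', hT'sub.trans (Finset.union_subset hTU (by simpa using hv))⟩

variable [Fintype α]

lemma eq_falseOn (x : α → Bool) : x = falseOn (Finset.univ.filter fun v => x v = false) := by
  funext v
  cases hx : x v <;> simp [falseOn, hx]

lemma isTransversal_compl_iff {K : Finset α} :
    IsTransversal 𝓑 Kᶜ ↔ ∀ B ∈ 𝓑, ¬ B ⊆ K := by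
  simp [IsTransversal, Finset.Nonempty, Finset.not_subset, and_comm]

lemma phiB_falseOn_iff {U : Finset α} :
    PhiB 𝓑 (falseOn U) = true ↔ U = ∅ ∨ IsTransversal 𝓑 U := by
  simp only [PhiB, decide_eq_true_eq, falseOn_eq_true]
  constructor
  · intro hU
    refine U.eq_empty_or_nonempty.imp_right fun ⟨w, hw⟩ B hB => ?_
    by_contra hBU
    exact hU B hB (fun u hu huU => hBU ⟨u, Finset.mem_inter.2 ⟨huU, hu⟩⟩) w hw
  · rintro (rfl | hU) B hB hBU
    · simp
    · obtain ⟨u, hu⟩ := hU B hB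
      exact absurd (Finset.mem_inter.1 hu).1 (hBU u (Finset.mem_inter.1 hu).2)

lemma phiB_eq_true_iff {x : α → Bool} :
    PhiB 𝓑 x = true ↔ ∀ B ∈ 𝓑, (∀ u ∈ B, x u = true) → ∀ v, x v = true :=
  decide_eq_true_iff

lemma le_phiB_of_minKeys_eq (hh : minKeys h = 𝓑) {x : α → Bool} (hx : h x = true) :
    PhiB 𝓑 x = true := by
  refine phiB_eq_true_iff.2 fun B hB hBx v => ?_
  by_cases hv : v ∈ B
  · exact hBx v hv
  · exact (hh ▸ hB : B ∈ minKeys h).1 v hv x hx hBx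

lemma eq_true_falseOn_of_mem_dualHyp (hh : minKeys h = 𝓑) {T : Finset α} (hT : T ∈ dualHyp 𝓑) :
    h (falseOn T) = true := by
  -- A witness that `Tᶜ` is not a key has as false set a transversal inside `T`, hence `T` itself.
  have hTc : ¬ IsKey h Tᶜ := fun hk => by
    obtain ⟨B, hB, hBT⟩ := isKey_iff_exists_minKeys_subset.1 hk
    exact isTransversal_compl_iff.1 (by rw [compl_compl]; exact hT.1) B (hh ▸ hB) hBT
  simp only [IsKey, Implicate, not_forall, Finset.mem_compl, not_not, exists_prop] at hTc
  obtain ⟨v, hvT, x, hx, hxT, hxv⟩ := hTc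
  set U := Finset.univ.filter fun u => x u = false
  have hxU : x = falseOn U := eq_falseOn x
  have hUT : U ⊆ T := fun u hu => by
    by_contra huT
    simp [U, hxT u huT] at hu
  have hU : IsTransversal 𝓑 U := by
    refine (phiB_falseOn_iff.1 (hxU ▸ le_phiB_of_minKeys_eq hh hx)).resolve_left ?_
    exact Finset.ne_empty_of_mem (a := v) (by simpa [U] using hxv)
  rw [← hT.2 U hU hUT, ← hxU]
  exact hx

lemma isKey_iff_of_le_phiB (hne : 𝓑.Nonempty) (hle : ∀ x, h x = true → PhiB 𝓑 x = true)
    (hdual : ∀ T ∈ dualHyp 𝓑, h (falseOn T) = true) (K : Finset α) :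
    IsKey h K ↔ ∃ B ∈ 𝓑, B ⊆ K := by
  constructor
  · intro hK
    by_contra! hKB
    obtain ⟨T, hT, hTK⟩ := exists_dualHyp_subset (isTransversal_compl_iff.2 hKB)
    obtain ⟨v, hv⟩ := hT.1.nonempty hne
    have hKT : ∀ a ∈ K, falseOn T a = true := fun a ha =>
      falseOn_eq_true.2 fun haT => Finset.mem_compl.1 (hTK haT) ha
    exact falseOn_eq_true.1 (hK v (Finset.mem_compl.1 (hTK hv)) _ (hdual T hT) hKT) hv
  · rintro ⟨B, hB, hBK⟩ v - x hx hxK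
    exact phiB_eq_true_iff.1 (hle x hx) B hB (fun u hu => hxK u (hBK hu)) v

lemma minKeys_phiB (hne : 𝓑.Nonempty) (hSp : SpernerFam 𝓑) : minKeys (PhiB 𝓑) = 𝓑 :=
  minKeys_eq_of_isKey_iff hSp <| isKey_iff_of_le_phiB hne (fun _ => id) fun _ hT =>
    phiB_falseOn_iff.2 (.inr hT.1)

variable (𝓑) in
/-- The least pure Horn function with `𝒦(h) = 𝓑` (see `minHorn_le`): its false sets are the
unions of minimal transversals of `𝓑`. -/
noncomputable def minHorn : (α → Bool) → Bool :=
  fun x => decide (∀ v, x v = false → ∃ T ∈ dualHyp 𝓑, v ∈ T ∧ ∀ u ∈ T, x u = false)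

lemma minHorn_eq_true_iff {x : α → Bool} :
    minHorn 𝓑 x = true ↔ ∀ v, x v = false → ∃ T ∈ dualHyp 𝓑, v ∈ T ∧ ∀ u ∈ T, x u = false :=
  decide_eq_true_iff

lemma minHorn_falseOn_iff {U : Finset α} :
    minHorn 𝓑 (falseOn U) = true ↔ ∀ v ∈ U, ∃ T ∈ dualHyp 𝓑, v ∈ T ∧ T ⊆ U := by
  simp only [minHorn_eq_true_iff, falseOn_eq_false]
  rfl

lemma pureHorn_minHorn : PureHorn (minHorn 𝓑) := by
  refine ⟨minHorn_eq_true_iff.2 fun v hv => absurd hv (by simp), fun x y hx hy => ?_⟩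
  refine minHorn_eq_true_iff.2 fun v hv => ?_
  rcases Bool.and_eq_false_iff.1 hv with hv | hv
  · obtain ⟨T, hT, hvT, hTx⟩ := minHorn_eq_true_iff.1 hx v hv
    exact ⟨T, hT, hvT, fun u hu => by simp [hTx u hu]⟩
  · obtain ⟨T, hT, hvT, hTy⟩ := minHorn_eq_true_iff.1 hy v hv
    exact ⟨T, hT, hvT, fun u hu => by simp [hTy u hu]⟩

lemma minKeys_minHorn (hne : 𝓑.Nonempty) (hSp : SpernerFam 𝓑) : minKeys (minHorn 𝓑) = 𝓑 := by
  refine minKeys_eq_of_isKey_iff hSp <| isKey_iff_of_le_phiB hne (fun x hx => ?_) fun T hT => ?_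
  · refine phiB_eq_true_iff.2 fun B hB hBx v => ?_
    by_contra hv
    obtain ⟨T, hT, -, hTx⟩ := minHorn_eq_true_iff.1 hx v (by simpa using hv)
    obtain ⟨u, hu⟩ := hT.1 B hB
    have := hBx u (Finset.mem_inter.1 hu).2
    simp [hTx u (Finset.mem_inter.1 hu).1] at this
  · exact minHorn_falseOn_iff.2 fun v hv => ⟨T, hT, hv, subset_rfl⟩

lemma minHorn_le (hH : PureHorn h) (hh : minKeys h = 𝓑) {x : α → Bool}
    (hx : minHorn 𝓑 x = true) : h x = true := by
  rw [eq_falseOn x] at hx ⊢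
  set U := Finset.univ.filter fun v => x v = false
  set s := Finset.univ.filter fun T => T ∈ dualHyp 𝓑 ∧ T ⊆ U
  have hsU : s.sup id = U := by
    refine le_antisymm (Finset.sup_le fun T hT => (Finset.mem_filter.1 hT).2.2) fun v hv => ?_
    obtain ⟨T, hT, hvT, hTU⟩ := minHorn_falseOn_iff.1 hx v hv
    exact Finset.mem_sup.2 ⟨T, Finset.mem_filter.2 ⟨Finset.mem_univ T, hT, hTU⟩, hvT⟩
  rw [← hsU]
  exact hH.falseOn_sup s id fun T hT => eq_true_falseOn_of_mem_dualHyp hh (Finset.mem_filter.1 hT).2.1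

lemma phiB_le_minHorn (hex : ∀ T ∈ dualHyp 𝓑, ∀ v ∉ T, ∃ T' ∈ dualHyp 𝓑, T' ≠ T ∧ T' ⊆ T ∪ {v})
    {x : α → Bool} (hx : PhiB 𝓑 x = true) : minHorn 𝓑 x = true := by
  rw [eq_falseOn x] at hx ⊢
  rcases phiB_falseOn_iff.1 hx with hU | hU
  · exact minHorn_falseOn_iff.2 fun v hv => by simp [hU] at hv
  · exact minHorn_falseOn_iff.2 fun v => exists_mem_dualHyp_of_exchange hex hU

end

/-- For a nonempty Sperner hypergraph `𝓑`, the pure Horn function `Φ_𝓑` is the unique one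
with `𝒦(h) = 𝓑` iff for every minimal transversal `T ∈ 𝓑^d` and every `v ∉ T` there is
`T' ∈ 𝓑^d` with `T' ≠ T` and `T' ⊆ T ∪ {v}`. -/
theorem stmt5 (𝓑 : Set (Finset V)) (hne : 𝓑.Nonempty) (hSp : SpernerFam 𝓑) :
    UniqueKeyHypergraph 𝓑 ↔
      ∀ T ∈ dualHyp 𝓑, ∀ v ∉ T, ∃ T' ∈ dualHyp 𝓑, T' ≠ T ∧ T' ⊆ T ∪ {v} := by
  constructor
  · rintro ⟨-, huniq⟩ T hT v hv
    have hΦ : PhiB 𝓑 (falseOn (T ∪ {v})) = true :=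
      phiB_falseOn_iff.2 (.inr (hT.1.mono Finset.subset_union_left))
    rw [← huniq _ pureHorn_minHorn (minKeys_minHorn hne hSp), minHorn_falseOn_iff] at hΦ
    obtain ⟨T', hT', hvT', hT'sub⟩ := hΦ v (by simp)
    exact ⟨T', hT', fun hT'T => hv (hT'T ▸ hvT'), hT'sub⟩
  · intro hex
    refine ⟨minKeys_phiB hne hSp, fun h hH hh => funext fun x => Bool.eq_iff_iff.2 ?_⟩
    exact ⟨le_phiB_of_minKeys_eq hh, fun hx => minHorn_le hH hh (phiB_le_minHorn hex hx)⟩
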